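/- arXiv:2012.12646 — 4 statements merged into one kernel-verified Lean document; each statement's English description precedes it below -/
import Mathlib

section
/- Let k ≥ 2 and let F be a k-chromatic graph such that deleting any single vertex of F leaves a graph that is still k-chromatic (i.e., F has no color-critical vertex). Let T'_{k-1}(n) be obtained from the Turán graph T_{k-1}(n) by choosing a vertex v in a largest part and joining v to every other vertex. Then T'_{k-1}(n) is F-free. -/
/-!
Colour `T'_{k-1}(n)` minus its apex `0` by residues mod `k - 1`: this is a proper
`(k-1)`-colouring, since away from the apex only vertices in different residue classes are
adjacent. An injective copy of `F` either avoids the apex, making `F` itself `(k-1)`-colourable,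
or meets it in a single vertex `w`, making `F - w` `(k-1)`-colourable. Both contradict the
assumption that `F` and every `F - w` are `k`-chromatic.
-/

/-- `T'_{k-1}(n)`: the Turán graph `T_{k-1}(n)` (in Mathlib's form, parts are residue classes
mod `k-1`, and the residue class of `0` is a largest part) together with all edges from the
vertex `0` to every other vertex. -/
def turanPlus (n k : ℕ) : SimpleGraph (Fin n) where
  Adj x y := x ≠ y ∧ ((x : ℕ) % (k - 1) ≠ (y : ℕ) % (k - 1) ∨ (x : ℕ) = 0 ∨ (y : ℕ) = 0)
  symm := ⟨by tauto⟩
  loopless := ⟨by tauto⟩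

namespace SimpleGraph

theorem turanGraph_colorable {n r : ℕ} (hr : 0 < r) : (turanGraph n r).Colorable r :=
  ⟨Coloring.mk (fun x => ⟨(x : ℕ) % r, Nat.mod_lt _ hr⟩) fun hxy hc =>
    (turanGraph_adj.mp hxy) (congrArg Fin.val hc)⟩

def turanPlusInduceNeZeroHom (n k : ℕ) :
    (turanPlus n k).induce {x : Fin n | (x : ℕ) ≠ 0} →g turanGraph n (k - 1) where
  toFun x := x
  map_rel' {x y} hxy := by
    rw [turanGraph_adj]
    have hx : (x.1 : ℕ) ≠ 0 := x.2
    have hy : (y.1 : ℕ) ≠ 0 := y.2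
    have hadj : (turanPlus n k).Adj x y := hxy
    exact hadj.2.resolve_right (by omega)

theorem colorable_turanPlus_induce_ne_zero {n k : ℕ} (hk : 2 ≤ k) :
    ((turanPlus n k).induce {x : Fin n | (x : ℕ) ≠ 0}).Colorable (k - 1) :=
  (turanGraph_colorable (by omega)).of_hom (turanPlusInduceNeZeroHom n k)

theorem Colorable.of_hom_of_forall_mem {V V' : Type*} {G : SimpleGraph V}
    {G' : SimpleGraph V'} {s : Set V'} {m : ℕ} (f : G →g G') (hf : ∀ v, f v ∈ s)
    (h : (G'.induce s).Colorable m) : G.Colorable m :=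
  h.of_hom ⟨fun v => ⟨f v, hf v⟩, f.map_adj⟩

theorem not_colorable_of_chromaticNumber_eq {V : Type*} {G : SimpleGraph V} {k m : ℕ}
    (hG : G.chromaticNumber = k) (hm : m < k) : ¬ G.Colorable m := fun h => by
  have := h.chromaticNumber_le
  rw [hG, Nat.cast_le] at this
  omega

end SimpleGraph

open SimpleGraph

theorem stmt_2_general {W : Type*} (F : SimpleGraph W) (k n : ℕ) (hk : 2 ≤ k)
    (hχ : F.chromaticNumber = (k : ℕ∞))
    (hnocrit : ∀ v : W, (F.induce {v}ᶜ).chromaticNumber = (k : ℕ∞)) :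
    ¬ ∃ f : F →g turanPlus n k, Function.Injective f := by
  rintro ⟨f, hf⟩
  have hcol := colorable_turanPlus_induce_ne_zero (n := n) hk
  by_cases hapex : ∃ w, ((f w : Fin n) : ℕ) = 0
  · obtain ⟨w, hw⟩ := hapex
    refine not_colorable_of_chromaticNumber_eq (hnocrit w) (by omega : k - 1 < k) ?_
    refine Colorable.of_hom_of_forall_mem (f.comp (Embedding.induce _).toHom) (fun v => ?_) hcol
    exact fun hv => v.2 (hf (Fin.ext (hv.trans hw.symm)))
  · push Not at hapex
    exact not_colorable_of_chromaticNumber_eq hχ (by omega : k - 1 < k)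
      (hcol.of_hom_of_forall_mem f hapex)

/-- If `F` is `k`-chromatic and has no color-critical vertex (deleting any vertex leaves a
`k`-chromatic graph), then `T'_{k-1}(n)` is `F`-free. -/
theorem stmt_2 {W : Type*} [Fintype W] (F : SimpleGraph W) (k n : ℕ) (hk : 2 ≤ k)
    (hχ : F.chromaticNumber = (k : ℕ∞))
    (hnocrit : ∀ v : W, (F.induce {v}ᶜ).chromaticNumber = (k : ℕ∞)) :
    ¬ ∃ f : F →g turanPlus n k, Function.Injective f :=
  stmt_2_general F k n hk hχ hnocrit
end

section
/- Let k ≥ 2, b ≥ 1, and let H = K_{b,...,b} be the complete k-partite graph with all parts of size b, and let a satisfy b > 2a - 2. Fix a copy of the Turán graph T_k(n) (with n divisible by k, each part of size n/k ≥ b) and let G_n be any graph on the same vertex set containing T_k(n) as a subgraph such that every vertex is incident to at most a-1 edges not in T_k(n), where all extra edges lie within parts of T_k(n). Then every copy of H in G_n uses only edges of T_k(n); hence N(H, G_n) = N(H, T_k(n)). -/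
/-- The number of copies of `H` in `G`: the number of subgraphs of `G` isomorphic to `H`. -/
noncomputable def copyCount {α β : Type*} (H : SimpleGraph α) (G : SimpleGraph β) : ℕ :=
  Set.ncard {G' : G.Subgraph | Nonempty (H ≃g G'.coe)}

/-- Let `H = K_{b,…,b}` (complete `k`-partite, parts of size `b`) with `b > 2a - 2`, and let
`G` contain the Turán graph `T_k(n)` (with `k ∣ n` and parts of size `n / k ≥ b`) so that all
extra edges lie within parts and every vertex is on at most `a - 1` extra edges. Then every
copy of `H` in `G` uses only edges of `T_k(n)`, hence `N(H, G) = N(H, T_k(n))`. -/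
theorem stmt_8 (k b a n : ℕ) (hk : 2 ≤ k) (hb : 1 ≤ b) (hba : 2 * a - 2 < b)
    (hdvd : k ∣ n) (hnb : b ≤ n / k) (G : SimpleGraph (Fin n))
    (hsub : SimpleGraph.turanGraph n k ≤ G)
    (hwithin : ∀ x y : Fin n, G.Adj x y → ¬ (SimpleGraph.turanGraph n k).Adj x y →
      (x : ℕ) % k = (y : ℕ) % k)
    (hdeg : ∀ v : Fin n,
      ({w : Fin n | G.Adj v w ∧ ¬ (SimpleGraph.turanGraph n k).Adj v w}).ncard ≤ a - 1) :
    (∀ f : SimpleGraph.completeMultipartiteGraph (fun _ : Fin k => Fin b) →g G,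
      Function.Injective f →
      ∀ x y, (SimpleGraph.completeMultipartiteGraph (fun _ : Fin k => Fin b)).Adj x y →
        (SimpleGraph.turanGraph n k).Adj (f x) (f y)) ∧
    copyCount (SimpleGraph.completeMultipartiteGraph (fun _ : Fin k => Fin b)) G =
      copyCount (SimpleGraph.completeMultipartiteGraph (fun _ : Fin k => Fin b))
        (SimpleGraph.turanGraph n k) := by
  classical
  set T := SimpleGraph.turanGraph n k with hT
  set H := SimpleGraph.completeMultipartiteGraph (fun _ : Fin k => Fin b) with hH
  have hTadj : ∀ x y : Fin n, T.Adj x y ↔ (x : ℕ) % k ≠ (y : ℕ) % k := by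
    intro x y; simp [hT, SimpleGraph.turanGraph]
  -- Finset of extra neighbors
  have hE : ∀ v : Fin n,
      (Finset.univ.filter (fun w => G.Adj v w ∧ ¬ T.Adj v w)).card ≤ a - 1 := by
    intro v
    have := hdeg v
    rwa [show {w : Fin n | G.Adj v w ∧ ¬ T.Adj v w}
        = ↑(Finset.univ.filter (fun w => G.Adj v w ∧ ¬ T.Adj v w)) by ext w; simp,
      Set.ncard_coe_finset] at this
  have part1 : ∀ f : H →g G, Function.Injective f →
      ∀ x y, H.Adj x y → T.Adj (f x) (f y) := by
    intro f hf x y hxy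
    by_contra hnot
    have hGxy : G.Adj (f x) (f y) := f.map_adj hxy
    -- class function
    set S : ℕ → Finset ((_ : Fin k) × Fin b) :=
      fun c => Finset.univ.filter (fun w => ((f w : Fin n) : ℕ) % k = c) with hS
    -- key claim
    have claimA : ∀ u v, H.Adj u v →
        ((f u : Fin n) : ℕ) % k = ((f v : Fin n) : ℕ) % k →
        (S (((f u : Fin n) : ℕ) % k)).card ≤ 2 * a - 2 := by
      intro u v huv hmod
      have hGuv : G.Adj (f u) (f v) := f.map_adj huv
      have hTuv : ¬ T.Adj (f u) (f v) := by rw [hTadj]; simpa using hmod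
      have hmemv : f v ∈ Finset.univ.filter (fun w => G.Adj (f u) w ∧ ¬ T.Adj (f u) w) := by
        simp [hGuv, hTuv]
      have hmemu : f u ∈ Finset.univ.filter (fun w => G.Adj (f v) w ∧ ¬ T.Adj (f v) w) := by
        simp only [Finset.mem_filter, Finset.mem_univ, true_and]
        exact ⟨hGuv.symm, fun h => hTuv h.symm⟩
      have ha2 : 2 ≤ a := by
        by_contra hlt
        push_neg at hlt
        have := hE (f u)
        have : (Finset.univ.filter (fun w => G.Adj (f u) w ∧ ¬ T.Adj (f u) w)).card = 0 := by
          omega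
        rw [Finset.card_eq_zero] at this
        simp [this] at hmemv
      -- map S r \ {u,v} into extra neighbor sets
      set Eu := (Finset.univ.filter (fun w => G.Adj (f u) w ∧ ¬ T.Adj (f u) w)) \ {f v}
      set Ev := (Finset.univ.filter (fun w => G.Adj (f v) w ∧ ¬ T.Adj (f v) w)) \ {f u}
      have hcard : ((S (((f u : Fin n) : ℕ) % k)) \ {u, v}).card ≤ (Eu ∪ Ev).card := by
        apply Finset.card_le_card_of_injOn f
        · intro w hw
          rw [Finset.mem_coe, Finset.mem_sdiff] at hw
          simp only [Finset.mem_sdiff, Finset.mem_insert, Finset.mem_singleton, hS,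
            Finset.mem_filter, Finset.mem_univ, true_and] at hw
          obtain ⟨hwc, hw2⟩ := hw
          push_neg at hw2
          obtain ⟨hwu, hwv⟩ := hw2
          have hwne : w.1 ≠ u.1 ∨ w.1 ≠ v.1 := by
            by_contra hc; push_neg at hc
            exact huv (hc.1 ▸ hc.2 ▸ rfl)
          rcases hwne with h1 | h1
          · have hadj : G.Adj (f u) (f w) := f.map_adj (by simpa [hH] using h1.symm)
            have htw : ¬ T.Adj (f u) (f w) := by
              rw [hTadj]; simp only [not_not]; omega
            refine Finset.mem_union_left _ ?_
            simp only [Eu, Finset.mem_sdiff, Finset.mem_filter, Finset.mem_univ, true_and,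
              Finset.mem_singleton]
            exact ⟨⟨hadj, htw⟩, fun h => hwv (hf h)⟩
          · have hadj : G.Adj (f v) (f w) := f.map_adj (by simpa [hH] using h1.symm)
            have htw : ¬ T.Adj (f v) (f w) := by
              rw [hTadj]; simp only [not_not]; omega
            refine Finset.mem_union_right _ ?_
            simp only [Ev, Finset.mem_sdiff, Finset.mem_filter, Finset.mem_univ, true_and,
              Finset.mem_singleton]
            exact ⟨⟨hadj, htw⟩, fun h => hwu (hf h)⟩
        · exact fun x _ y _ h => hf h
      have hEu : Eu.card ≤ a - 2 := by
        have h1 := hE (f u)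
        have h2 := Finset.card_sdiff_of_subset (Finset.singleton_subset_iff.2 hmemv)
        have h3 : ({f v} : Finset (Fin n)).card = 1 := Finset.card_singleton _
        simp only [Eu]
        omega
      have hEv : Ev.card ≤ a - 2 := by
        have h1 := hE (f v)
        have h2 := Finset.card_sdiff_of_subset (Finset.singleton_subset_iff.2 hmemu)
        have h3 : ({f u} : Finset (Fin n)).card = 1 := Finset.card_singleton _
        simp only [Ev]
        omega
      have hUn : (Eu ∪ Ev).card ≤ Eu.card + Ev.card := Finset.card_union_le _ _
      have hfull : (S (((f u : Fin n) : ℕ) % k)).card ≤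
          ((S (((f u : Fin n) : ℕ) % k)) \ {u, v}).card + ({u, v} : Finset _).card :=
        Finset.card_le_card_sdiff_add_card
      have h2 : ({u, v} : Finset ((_ : Fin k) × Fin b)).card ≤ 2 :=
        Finset.card_insert_le _ _ |>.trans (by simp)
      omega
    -- every class has at most b
    have claimB : ∀ c, (S c).card ≤ b := by
      intro c
      by_contra hgt
      push_neg at hgt
      -- find adjacent pair in S c
      have : ∃ u ∈ S c, ∃ v ∈ S c, u.1 ≠ v.1 := by
        by_contra hcon
        push_neg at hcon
        have : (S c).card ≤ b := by
          have := Finset.card_le_card_of_injOn (s := S c)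
            (t := (Finset.univ : Finset (Fin b))) (fun w => w.2)
            (fun _ _ => Finset.mem_univ _)
            (fun x hx y hy h => Sigma.ext
              (hcon x (Finset.mem_coe.1 hx) y (Finset.mem_coe.1 hy)) (heq_of_eq h))
          simpa using this
        omega
      obtain ⟨u, hu, v, hv, huv1⟩ := this
      have huv : H.Adj u v := by simpa [hH] using huv1
      simp only [hS, Finset.mem_filter] at hu hv
      have := claimA u v huv (hu.2.trans hv.2.symm)
      rw [hu.2] at this
      omega
    -- class r is smaller
    have hmodxy : ((f x : Fin n) : ℕ) % k = ((f y : Fin n) : ℕ) % k :=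
      hwithin _ _ hGxy hnot
    have hr : (S (((f x : Fin n) : ℕ) % k)).card ≤ 2 * a - 2 := claimA x y hxy hmodxy
    -- sum up
    have hsum : (Finset.univ : Finset ((_ : Fin k) × Fin b)).card =
        ∑ c ∈ Finset.range k, (S c).card := by
      apply Finset.card_eq_sum_card_fiberwise
      intro w _
      exact Finset.mem_range.2 (Nat.mod_lt _ (by omega))
    have htotal : (Finset.univ : Finset ((_ : Fin k) × Fin b)).card = k * b := by
      simp [Finset.card_univ, Fintype.card_sigma, mul_comm]
    have hrk : ((f x : Fin n) : ℕ) % k ∈ Finset.range k :=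
      Finset.mem_range.2 (Nat.mod_lt _ (by omega))
    have hlt : ∑ c ∈ Finset.range k, (S c).card < ∑ c ∈ Finset.range k, b := by
      apply Finset.sum_lt_sum (fun c _ => claimB c)
      exact ⟨_, hrk, by omega⟩
    simp only [Finset.sum_const, Finset.card_range, smul_eq_mul] at hlt
    omega
  refine ⟨part1, ?_⟩
  -- bijection between subgraph copies
  unfold copyCount
  rw [← Nat.card_coe_set_eq, ← Nat.card_coe_set_eq]
  apply Nat.card_congr
  refine ⟨fun p => ⟨⟨p.1.verts, p.1.Adj, ?_, p.1.edge_vert, p.1.symm⟩, ?_⟩,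
    fun p => ⟨⟨p.1.verts, p.1.Adj, fun h => hsub (p.1.adj_sub h), p.1.edge_vert, p.1.symm⟩, ?_⟩,
    ?_, ?_⟩
  · -- adj_sub : edges of the copy are Turán edges
    intro x y hxy
    obtain ⟨e⟩ := p.2
    set f : H →g G := p.1.hom.comp e.toHom with hf
    have hfinj : Function.Injective f := Subtype.val_injective.comp e.injective
    have hx : x ∈ p.1.verts := p.1.edge_vert hxy
    have hy : y ∈ p.1.verts := p.1.edge_vert hxy.symm
    have hto : H.Adj (e.symm ⟨x, hx⟩) (e.symm ⟨y, hy⟩) := by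
      rw [← e.map_adj_iff]
      simp only [RelIso.apply_symm_apply]
      exact hxy
    have := part1 f hfinj _ _ hto
    simp [hf, SimpleGraph.Subgraph.hom, RelIso.apply_symm_apply] at this
    exact this
  · exact p.2
  · exact p.2
  · intro p; rfl
  · intro p; rfl
end

section
/- Let H = K_{b,...,b} be the complete k-partite graph with parts of size b, and suppose U is a set of more than 2a-2 vertices of a copy of H such that U is an independent set in H except for edges each of which has the property that every other vertex of H is adjacent to at least one of its endpoints, and every vertex of U is in at most a-1 such edges. Then U contains no edges of H at all, hence U is contained in a single part of H and |U| ≤ b. -/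
/-- In `H = K_{b,…,b}`, if `U` is a set of more than `2a - 2` vertices such that every edge of
`H` inside `U` has the property that every other vertex of `H` is adjacent to one of its
endpoints, and every vertex of `U` is on at most `a - 1` such edges within `U`, then `U`
contains no edge of `H` at all, hence `U` lies in a single part of `H` and `|U| ≤ b`. -/
theorem stmt_9 (k b a : ℕ) (hk : 1 ≤ k) (hb : 1 ≤ b)
    (U : Finset (Σ _ : Fin k, Fin b)) (hU : 2 * a - 2 < U.card)
    (h1 : ∀ u ∈ U, ∀ v ∈ U,
      (SimpleGraph.completeMultipartiteGraph (fun _ : Fin k => Fin b)).Adj u v →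
      ∀ w : (Σ _ : Fin k, Fin b), w ≠ u → w ≠ v →
        (SimpleGraph.completeMultipartiteGraph (fun _ : Fin k => Fin b)).Adj w u ∨
        (SimpleGraph.completeMultipartiteGraph (fun _ : Fin k => Fin b)).Adj w v)
    (h2 : ∀ u ∈ U,
      (U.filter (fun v =>
        (SimpleGraph.completeMultipartiteGraph (fun _ : Fin k => Fin b)).Adj u v)).card
        ≤ a - 1) :
    (∀ u ∈ U, ∀ v ∈ U,
      ¬ (SimpleGraph.completeMultipartiteGraph (fun _ : Fin k => Fin b)).Adj u v) ∧
    (∃ i : Fin k, ∀ u ∈ U, u.1 = i) ∧ U.card ≤ b := by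
  have hind : ∀ u ∈ U, ∀ v ∈ U,
      ¬ (SimpleGraph.completeMultipartiteGraph (fun _ : Fin k => Fin b)).Adj u v := by
    intro u hu v hv hadj
    -- every vertex of U is adjacent to u or to v
    have hsub : U ⊆ (U.filter (fun w =>
        (SimpleGraph.completeMultipartiteGraph (fun _ : Fin k => Fin b)).Adj u w)) ∪
        (U.filter (fun w =>
        (SimpleGraph.completeMultipartiteGraph (fun _ : Fin k => Fin b)).Adj v w)) := by
      intro w hw
      simp only [Finset.mem_union, Finset.mem_filter]
      have huv : u.1 ≠ v.1 := hadj
      by_cases h : u.1 = w.1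
      · exact Or.inr ⟨hw, fun e => huv (h.trans e.symm)⟩
      · exact Or.inl ⟨hw, h⟩
    have := Finset.card_le_card hsub
    have h2u := h2 u hu
    have h2v := h2 v hv
    have := this.trans (Finset.card_union_le _ _)
    omega
  refine ⟨hind, ?_, ?_⟩
  · have hne : U.Nonempty := Finset.card_pos.mp (by omega)
    obtain ⟨u, hu⟩ := hne
    refine ⟨u.1, fun v hv => ?_⟩
    by_contra h
    exact hind v hv u hu h
  · have hne : U.Nonempty := Finset.card_pos.mp (by omega)
    obtain ⟨u, hu⟩ := hne
    have : U.card ≤ (Finset.univ : Finset (Fin b)).card := by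
      apply Finset.card_le_card_of_injOn (fun v => v.2) (fun _ _ => Finset.mem_univ _)
      intro x hx y hy hxy
      have hx1 : x.1 = u.1 := by
        by_contra h; exact hind x hx u hu h
      have hy1 : y.1 = u.1 := by
        by_contra h; exact hind y hy u hu h
      exact Sigma.ext (hx1.trans hy1.symm) (heq_of_eq hxy)
    simpa using this
end

section
/- The number of copies of K_{k-1} in any K_k-free graph on n vertices is at most the number of copies of K_{k-1} in the Turán graph T_{k-1}(n). (Zykov's theorem, special case.) -/
open Finset SimpleGraph
open scoped Classical

set_option linter.unusedSectionVars false
set_option maxHeartbeats 1000000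

namespace Zykov

variable {V : Type*} [Fintype V] [DecidableEq V]

/-- the finset of `r`-cliques -/
noncomputable def cf (r : ℕ) (G : SimpleGraph V) : Finset (Finset V) :=
  (univ : Finset (Finset V)).filter (fun c => G.IsNClique r c)

/-- cliques containing a vertex -/
noncomputable def cfm (r : ℕ) (G : SimpleGraph V) (v : V) : Finset (Finset V) :=
  (cf r G).filter (fun c => v ∈ c)

/-- cliques avoiding a vertex -/
noncomputable def cfn (r : ℕ) (G : SimpleGraph V) (v : V) : Finset (Finset V) :=
  (cf r G).filter (fun c => v ∉ c)

/-- cliques containing two vertices -/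
noncomputable def cfb (r : ℕ) (G : SimpleGraph V) (v w : V) : Finset (Finset V) :=
  (cf r G).filter (fun c => v ∈ c ∧ w ∈ c)

/-- cliques containing `v` avoiding `w` -/
noncomputable def cfbn (r : ℕ) (G : SimpleGraph V) (v w : V) : Finset (Finset V) :=
  (cf r G).filter (fun c => v ∈ c ∧ w ∉ c)

noncomputable def ecnt (G : SimpleGraph V) : ℕ := G.edgeSet.ncard

lemma mem_cf {r : ℕ} {G : SimpleGraph V} {c : Finset V} : c ∈ cf r G ↔ G.IsNClique r c := by
  simp [cf]

lemma adj_of_clique {r : ℕ} {G : SimpleGraph V} {c : Finset V} (h : G.IsNClique r c)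
    {x y : V} (hx : x ∈ c) (hy : y ∈ c) (hxy : x ≠ y) : G.Adj x y :=
  h.1 (Finset.mem_coe.mpr hx) (Finset.mem_coe.mpr hy) hxy

lemma cf_split (r : ℕ) (G : SimpleGraph V) (t : V) :
    #(cf r G) = #(cfm r G t) + #(cfn r G t) := by
  rw [cfm, cfn]
  exact (Finset.card_filter_add_card_filter_not (p := fun c => t ∈ c)).symm

lemma cfm_split (r : ℕ) (G : SimpleGraph V) (w t : V) :
    #(cfm r G w) = #(cfb r G w t) + #(cfbn r G w t) := by
  rw [cfb, cfbn]
  have h := Finset.card_filter_add_card_filter_not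
    (s := (cf r G).filter (fun c => w ∈ c)) (p := fun c => t ∈ c)
  rw [Finset.filter_filter, Finset.filter_filter] at h
  rw [cfm]
  exact h.symm

lemma isNClique_replace_of_not_mem {G : SimpleGraph V} {s t : V} {r : ℕ} {c : Finset V}
    (htc : t ∉ c) : (G.replaceVertex s t).IsNClique r c ↔ G.IsNClique r c := by
  constructor <;> rintro ⟨h1, h2⟩ <;> refine ⟨fun x hx y hy hxy => ?_, h2⟩
  · have := h1 hx hy hxy
    rwa [G.adj_replaceVertex_iff_of_ne _
      (ne_of_mem_of_not_mem (Finset.mem_coe.mp hx) htc)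
      (ne_of_mem_of_not_mem (Finset.mem_coe.mp hy) htc)] at this
  · rw [G.adj_replaceVertex_iff_of_ne _
      (ne_of_mem_of_not_mem (Finset.mem_coe.mp hx) htc)
      (ne_of_mem_of_not_mem (Finset.mem_coe.mp hy) htc)]
    exact h1 hx hy hxy

lemma cfn_replace (G : SimpleGraph V) (s t : V) (r : ℕ) :
    cfn r (G.replaceVertex s t) t = cfn r G t := by
  ext c
  simp only [cfn, mem_filter, mem_cf]
  constructor <;> rintro ⟨h1, h2⟩
  · exact ⟨(isNClique_replace_of_not_mem h2).mp h1, h2⟩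
  · exact ⟨(isNClique_replace_of_not_mem h2).mpr h1, h2⟩

lemma cfm_replace_card {G : SimpleGraph V} {s t : V} (hst : s ≠ t) (hnadj : ¬G.Adj s t)
    (r : ℕ) : #(cfm r (G.replaceVertex s t) t) = #(cfm r G s) := by
  apply Finset.card_nbij' (i := fun c => insert s (c.erase t)) (j := fun c => insert t (c.erase s))
  · -- forward maps into target
    intro c hc
    rw [cfm, Finset.mem_coe, mem_filter, mem_cf] at hc ⊢
    obtain ⟨hcl, htc⟩ := hc
    have hsc : s ∉ c := by
      intro hsc
      exact G.not_adj_replaceVertex_same s t (adj_of_clique hcl hsc htc hst)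
    have hcr : #c = r := hcl.2
    refine ⟨⟨fun x hx y hy hxy => ?_, ?_⟩, Finset.mem_insert_self s _⟩
    · simp only [Finset.coe_insert, Set.mem_insert_iff, Finset.mem_coe, Finset.mem_erase] at hx hy
      rcases hx with rfl | ⟨hxt, hxc⟩
      · rcases hy with rfl | ⟨hyt, hyc⟩
        · exact absurd rfl hxy
        · have := adj_of_clique hcl htc hyc (Ne.symm hyt)
          rwa [G.adj_replaceVertex_iff_of_ne_right _ hyt] at this
      · rcases hy with rfl | ⟨hyt, hyc⟩
        · have := adj_of_clique hcl htc hxc (Ne.symm hxt)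
          rw [G.adj_replaceVertex_iff_of_ne_right _ hxt] at this
          exact this.symm
        · have := adj_of_clique hcl hxc hyc hxy
          rwa [G.adj_replaceVertex_iff_of_ne _ hxt hyt] at this
    · rw [Finset.card_insert_of_notMem (fun h => hsc (Finset.mem_of_mem_erase h)),
        Finset.card_erase_of_mem htc]
      have : 0 < #c := Finset.card_pos.mpr ⟨t, htc⟩
      omega
  · -- backward maps into source
    intro c hc
    rw [cfm, Finset.mem_coe, mem_filter, mem_cf] at hc ⊢
    obtain ⟨hcl, hsc⟩ := hc
    have htc : t ∉ c := by
      intro htc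
      exact hnadj (adj_of_clique hcl hsc htc hst)
    have hcr : #c = r := hcl.2
    refine ⟨⟨fun x hx y hy hxy => ?_, ?_⟩, Finset.mem_insert_self t _⟩
    · simp only [Finset.coe_insert, Set.mem_insert_iff, Finset.mem_coe, Finset.mem_erase] at hx hy
      rcases hx with rfl | ⟨hxs, hxc⟩
      · rcases hy with rfl | ⟨hys, hyc⟩
        · exact absurd rfl hxy
        · rw [G.adj_replaceVertex_iff_of_ne_right _ (ne_of_mem_of_not_mem hyc htc)]
          exact adj_of_clique hcl hsc hyc (Ne.symm hys)
      · rcases hy with rfl | ⟨hys, hyc⟩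
        · exact ((G.adj_replaceVertex_iff_of_ne_right _ (ne_of_mem_of_not_mem hxc htc)).mpr
            (adj_of_clique hcl hsc hxc (Ne.symm hxs))).symm
        · rw [G.adj_replaceVertex_iff_of_ne _ (ne_of_mem_of_not_mem hxc htc)
            (ne_of_mem_of_not_mem hyc htc)]
          exact adj_of_clique hcl hxc hyc hxy
    · rw [Finset.card_insert_of_notMem (fun h => htc (Finset.mem_of_mem_erase h)),
        Finset.card_erase_of_mem hsc]
      have : 0 < #c := Finset.card_pos.mpr ⟨s, hsc⟩
      omega
  · -- left inverse
    intro c hc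
    rw [cfm, Finset.mem_coe, mem_filter, mem_cf] at hc
    have hsc : s ∉ c := by
      intro hsc
      exact G.not_adj_replaceVertex_same s t (adj_of_clique hc.1 hsc hc.2 hst)
    dsimp only
    rw [Finset.erase_insert (fun h => hsc (Finset.mem_of_mem_erase h)), Finset.insert_erase hc.2]
  · -- right inverse
    intro c hc
    rw [cfm, Finset.mem_coe, mem_filter, mem_cf] at hc
    have htc : t ∉ c := by
      intro htc
      exact hnadj (adj_of_clique hc.1 hc.2 htc hst)
    dsimp only
    rw [Finset.erase_insert (fun h => htc (Finset.mem_of_mem_erase h)), Finset.insert_erase hc.2]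

lemma cc_replace {G : SimpleGraph V} {s t : V} (hst : s ≠ t) (hnadj : ¬G.Adj s t) (r : ℕ) :
    #(cf r (G.replaceVertex s t)) + #(cfm r G t) = #(cf r G) + #(cfm r G s) := by
  have e1 := cf_split r (G.replaceVertex s t) t
  have e2 := cf_split r G t
  have e3 := cfm_replace_card hst hnadj r
  have e4 := congrArg Finset.card (cfn_replace G s t r)
  omega

lemma ccAt_replace {G : SimpleGraph V} {s t : V} (w : V) (hw : ¬G.Adj s w) (hwt : w ≠ t)
    (r : ℕ) : #(cfm r (G.replaceVertex s t) w) + #(cfb r G w t) = #(cfm r G w) := by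
  have h1 : cfm r (G.replaceVertex s t) w = cfbn r G w t := by
    ext c
    simp only [cfm, cfbn, mem_filter, mem_cf]
    constructor
    · rintro ⟨hcl, hwc⟩
      have htc : t ∉ c := by
        intro htc
        have := adj_of_clique hcl htc hwc (Ne.symm hwt)
        rw [G.adj_replaceVertex_iff_of_ne_right _ hwt] at this
        exact hw this
      exact ⟨(isNClique_replace_of_not_mem htc).mp hcl, hwc, htc⟩
    · rintro ⟨hcl, hwc, htc⟩
      exact ⟨(isNClique_replace_of_not_mem htc).mpr hcl, hwc⟩
  have h2 := cfm_split r G w t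
  rw [h1]
  omega

lemma cfb_eq_zero {G : SimpleGraph V} {x y : V} (hxy : x ≠ y) (hnadj : ¬G.Adj x y)
    (r : ℕ) : #(cfb r G x y) = 0 := by
  rw [cfb, Finset.card_eq_zero, Finset.filter_eq_empty_iff]
  rintro c hc ⟨hx, hy⟩
  rw [mem_cf] at hc
  exact hnadj (adj_of_clique hc hx hy hxy)

lemma cf_deleteEdge {G : SimpleGraph V} {x y : V} (r : ℕ)
    (h0 : #(cfb r G x y) = 0) :
    cf r (G.deleteEdges {s(x, y)}) = cf r G := by
  rw [cfb, Finset.card_eq_zero, Finset.filter_eq_empty_iff] at h0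
  apply Finset.Subset.antisymm
  · intro c hc
    rw [mem_cf] at hc ⊢
    exact ⟨hc.1.mono (G.deleteEdges_le _), hc.2⟩
  · intro c hc
    rw [mem_cf] at hc ⊢
    refine ⟨fun a ha b hb hab => ?_, hc.2⟩
    rw [SimpleGraph.deleteEdges_adj]
    refine ⟨adj_of_clique hc (Finset.mem_coe.mp ha) (Finset.mem_coe.mp hb) hab, ?_⟩
    simp only [Set.mem_singleton_iff, Sym2.eq, Sym2.rel_iff', Prod.mk.injEq, Prod.swap_prod_mk]
    rintro (⟨rfl, rfl⟩ | ⟨rfl, rfl⟩)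
    · exact h0 (mem_cf.mpr hc) ⟨Finset.mem_coe.mp ha, Finset.mem_coe.mp hb⟩
    · exact h0 (mem_cf.mpr hc) ⟨Finset.mem_coe.mp hb, Finset.mem_coe.mp ha⟩

lemma ecnt_deleteEdge_lt {G : SimpleGraph V} {x y : V} (hadj : G.Adj x y) :
    ecnt (G.deleteEdges {s(x, y)}) < ecnt G := by
  rw [ecnt, ecnt, SimpleGraph.edgeSet_deleteEdges]
  apply Set.ncard_lt_ncard _ G.edgeSet.toFinite
  rw [Set.ssubset_iff_of_subset Set.diff_subset]
  exact ⟨s(x, y), hadj, by simp⟩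

lemma ecnt_le (G : SimpleGraph V) : ecnt G ≤ Fintype.card (Sym2 V) := by
  rw [ecnt]
  have := Set.ncard_le_ncard (Set.subset_univ G.edgeSet) (Set.finite_univ)
  rwa [Set.ncard_univ, Nat.card_eq_fintype_card] at this


/-- balanced part sizes -/
def bal (n r : ℕ) (i : Fin r) : ℕ := n / r + if (i : ℕ) < n % r then 1 else 0

lemma card_filter_val_lt (r s : ℕ) (hs : s ≤ r) :
    #((univ : Finset (Fin r)).filter (fun i : Fin r => (i : ℕ) < s)) = s := by
  have h : (univ : Finset (Fin r)).filter (fun i : Fin r => (i : ℕ) < s)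
      = (Finset.range s).attachFin (fun m hm => lt_of_lt_of_le (Finset.mem_range.mp hm) hs) := by
    ext i
    rw [Finset.mem_filter, Finset.mem_attachFin, Finset.mem_range]
    simp
  rw [h, Finset.card_attachFin, Finset.card_range]

lemma two_valued_prod {r : ℕ} (w : Fin r → ℕ) (m : ℕ) (h : ∀ i, w i = m ∨ w i = m + 1) :
    ∏ i, w i = (m + 1) ^ #(univ.filter (fun i => w i = m + 1)) *
      m ^ (r - #(univ.filter (fun i => w i = m + 1))) := by
  have hcard : #(univ.filter (fun i => ¬w i = m + 1)) =
      r - #(univ.filter (fun i => w i = m + 1)) := by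
    have h2 := Finset.card_filter_add_card_filter_not
      (s := (univ : Finset (Fin r))) (p := fun i => w i = m + 1)
    rw [Finset.card_univ, Fintype.card_fin] at h2
    omega
  have hval : ∀ i ∈ univ.filter (fun i => ¬w i = m + 1), w i = m := by
    intro i hi
    have hni := (Finset.mem_filter.mp hi).2
    rcases h i with h' | h'
    · exact h'
    · exact absurd h' hni
  rw [← Finset.prod_filter_mul_prod_filter_not univ (fun i => w i = m + 1)]
  congr 1
  · rw [Finset.prod_congr rfl (fun i hi => (Finset.mem_filter.mp hi).2), Finset.prod_const]
  · rw [Finset.prod_congr rfl hval, Finset.prod_const, hcard]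

lemma balanced_prod_eq {r n : ℕ} (hr : 0 < r) (w : Fin r → ℕ) (hsum : ∑ i, w i = n)
    (hbal : ∀ i j, w i ≤ w j + 1) : ∏ i, w i = ∏ i, bal n r i := by
  haveI : Nonempty (Fin r) := Fin.pos_iff_nonempty.mp hr
  obtain ⟨i0, -, hmin⟩ := Finset.exists_min_image univ w ⟨Classical.arbitrary _, mem_univ _⟩
  set m := w i0 with hm
  have hv : ∀ i, w i = m ∨ w i = m + 1 := fun i => by
    have h1 := hmin i (mem_univ i); have h2 := hbal i i0; omega
  set t := #(univ.filter (fun i => w i = m + 1)) with ht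
  have htle : t ≤ r := by
    rw [ht]
    calc #(univ.filter (fun i => w i = m + 1)) ≤ #(univ : Finset (Fin r)) :=
        Finset.card_le_card (Finset.filter_subset _ _)
      _ = r := by rw [Finset.card_univ, Fintype.card_fin]
  have htlt : t < r := by
    rcases Nat.lt_or_ge t r with h | h
    · exact h
    · exfalso
      have heq : univ.filter (fun i => w i = m + 1) = univ := by
        apply Finset.eq_univ_of_card
        rw [← ht, Fintype.card_fin]
        omega
      have h3 : i0 ∈ univ.filter (fun i => w i = m + 1) := by
        rw [heq]; exact mem_univ i0
      rw [Finset.mem_filter] at h3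
      omega
  have hsum2 : n = r * m + t := by
    have e1 : ∑ i ∈ univ.filter (fun i => w i = m + 1), w i = t * (m + 1) := by
      rw [Finset.sum_congr rfl (fun i hi => (Finset.mem_filter.mp hi).2), Finset.sum_const,
        smul_eq_mul, ht]
    have hcard : #(univ.filter (fun i => ¬w i = m + 1)) = r - t := by
      have h2 := Finset.card_filter_add_card_filter_not
        (s := (univ : Finset (Fin r))) (p := fun i => w i = m + 1)
      rw [Finset.card_univ, Fintype.card_fin] at h2
      omega
    have hval : ∀ i ∈ univ.filter (fun i => ¬w i = m + 1), w i = m := by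
      intro i hi
      have hni := (Finset.mem_filter.mp hi).2
      rcases hv i with h' | h'
      · exact h'
      · exact absurd h' hni
    have e2 : ∑ i ∈ univ.filter (fun i => ¬w i = m + 1), w i = (r - t) * m := by
      rw [Finset.sum_congr rfl hval, Finset.sum_const, smul_eq_mul, hcard]
    have e3 := Finset.sum_filter_add_sum_filter_not univ (fun i => w i = m + 1) w
    obtain ⟨d, hd⟩ := Nat.exists_eq_add_of_le htle
    have e4 : t * (m + 1) + (r - t) * m = r * m + t := by
      rw [hd]
      have h5 : t + d - t = d := by omega
      rw [h5]
      ring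
    omega
  have hdiv : n / r = m := by rw [hsum2, Nat.mul_add_div hr, Nat.div_eq_of_lt htlt, Nat.add_zero]
  have hmod : n % r = t := by rw [hsum2, Nat.mul_add_mod, Nat.mod_eq_of_lt htlt]
  have hvb : ∀ i, bal n r i = m ∨ bal n r i = m + 1 := fun i => by
    rw [bal, hdiv]; split <;> omega
  rw [two_valued_prod w m hv, two_valued_prod (bal n r) m hvb, ← ht]
  have hfeq : (univ.filter (fun i => bal n r i = m + 1)) =
      (univ.filter (fun i : Fin r => (i : ℕ) < n % r)) := by
    apply Finset.filter_congr
    intro i _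
    rw [bal, hdiv]
    constructor
    · intro h; by_contra hc; rw [if_neg hc] at h; omega
    · intro h; rw [if_pos h]
  rw [hfeq, card_filter_val_lt r (n % r) (le_of_lt (Nat.mod_lt n hr)), hmod]

lemma prod_le_bal {r n : ℕ} (hr : 0 < r) :
    ∀ (N : ℕ) (w : Fin r → ℕ), (∑ i, w i * w i) ≤ N → (∑ i, w i = n) →
      ∏ i, w i ≤ ∏ i, bal n r i := by
  intro N
  induction N with
  | zero =>
    intro w hN hsum
    have hz : ∀ i, w i = 0 := by
      intro i
      have := Finset.sum_eq_zero_iff.mp (Nat.le_zero.mp hN) i (mem_univ i)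
      exact mul_self_eq_zero.mp this
    exact le_of_eq (balanced_prod_eq hr w hsum (fun i j => by simp [hz]))
  | succ N ih =>
    intro w hN hsum
    by_cases hbal : ∀ i j, w i ≤ w j + 1
    · exact le_of_eq (balanced_prod_eq hr w hsum hbal)
    · push_neg at hbal
      obtain ⟨i, j, hij⟩ := hbal
      have hne : i ≠ j := by intro h; subst h; omega
      set w' : Fin r → ℕ := Function.update (Function.update w i (w i - 1)) j (w j + 1) with hw'
      have hwi : w' i = w i - 1 := by
        rw [hw', Function.update_of_ne hne, Function.update_self]
      have hwj : w' j = w j + 1 := by rw [hw', Function.update_self]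
      have hwk : ∀ k, k ≠ i → k ≠ j → w' k = w k := fun k hki hkj => by
        rw [hw', Function.update_of_ne hkj, Function.update_of_ne hki]
      have hjmem : j ∈ univ.erase i := Finset.mem_erase.mpr ⟨Ne.symm hne, mem_univ j⟩
      set S := (univ.erase i).erase j with hS
      have hmemS : ∀ k ∈ S, k ≠ i ∧ k ≠ j := by
        intro k hk
        have h1 := Finset.mem_erase.mp hk
        have h2 := Finset.mem_erase.mp h1.2
        exact ⟨h2.1, h1.1⟩
      have hr1 : ∑ k ∈ S, w' k = ∑ k ∈ S, w k :=
        Finset.sum_congr rfl (fun k hk => hwk k (hmemS k hk).1 (hmemS k hk).2)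
      have hr2 : ∑ k ∈ S, w' k * w' k = ∑ k ∈ S, w k * w k :=
        Finset.sum_congr rfl (fun k hk => by rw [hwk k (hmemS k hk).1 (hmemS k hk).2])
      have hr3 : ∏ k ∈ S, w' k = ∏ k ∈ S, w k :=
        Finset.prod_congr rfl (fun k hk => hwk k (hmemS k hk).1 (hmemS k hk).2)
      have es : ∑ k, w k = (∑ k ∈ S, w k) + w j + w i := by
        rw [← Finset.sum_erase_add univ _ (mem_univ i), ← Finset.sum_erase_add (univ.erase i) _ hjmem]
      have es' : ∑ k, w' k = (∑ k ∈ S, w' k) + w' j + w' i := by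
        rw [← Finset.sum_erase_add univ _ (mem_univ i), ← Finset.sum_erase_add (univ.erase i) _ hjmem]
      have eq : ∑ k, w k * w k = (∑ k ∈ S, w k * w k) + w j * w j + w i * w i := by
        rw [← Finset.sum_erase_add univ _ (mem_univ i), ← Finset.sum_erase_add (univ.erase i) _ hjmem]
      have eq' : ∑ k, w' k * w' k = (∑ k ∈ S, w' k * w' k) + w' j * w' j + w' i * w' i := by
        rw [← Finset.sum_erase_add univ _ (mem_univ i), ← Finset.sum_erase_add (univ.erase i) _ hjmem]
      have ep : ∏ k, w k = (∏ k ∈ S, w k) * w j * w i := by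
        rw [← Finset.prod_erase_mul univ _ (mem_univ i), ← Finset.prod_erase_mul (univ.erase i) _ hjmem]
      have ep' : ∏ k, w' k = (∏ k ∈ S, w' k) * w' j * w' i := by
        rw [← Finset.prod_erase_mul univ _ (mem_univ i), ← Finset.prod_erase_mul (univ.erase i) _ hjmem]
      obtain ⟨a, ha⟩ : ∃ a, w i = a + 1 := ⟨w i - 1, by omega⟩
      have hba : w j + 1 ≤ a := by omega
      have hsq : (w j + 1) * (w j + 1) + (w i - 1) * (w i - 1) + 1 ≤ w j * w j + w i * w i := by
        rw [ha, Nat.add_sub_cancel]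
        nlinarith
      have hpr : w i * w j ≤ (w i - 1) * (w j + 1) := by
        rw [ha, Nat.add_sub_cancel]
        nlinarith
      have hsum' : ∑ k, w' k = n := by
        rw [es', hr1, hwi, hwj]
        omega
      have hsq' : ∑ k, w' k * w' k ≤ N := by
        rw [eq', hr2, hwi, hwj]
        rw [eq] at hN
        omega
      have hprod_le : ∏ k, w k ≤ ∏ k, w' k := by
        rw [ep, ep', hr3, hwi, hwj, mul_assoc, mul_assoc]
        apply Nat.mul_le_mul_left
        rw [mul_comm (w j) (w i), mul_comm (w j + 1) (w i - 1)]
        exact hpr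
      exact le_trans hprod_le (ih w' hsq' hsum')

-- appended to zykov.lean
lemma bal_prod_le_turan (n r : ℕ) (hr : 0 < r) :
    ∏ i : Fin r, bal n r i ≤ #(cf r (turanGraph n r)) := by
  rcases Nat.eq_zero_or_pos n with rfl | hn
  · have h0 : bal 0 r ⟨0, hr⟩ = 0 := by simp [bal]
    rw [Finset.prod_eq_zero (mem_univ (⟨0, hr⟩ : Fin r)) h0]
    exact Nat.zero_le _
  · have hdm : n / r * r + n % r = n := Nat.div_add_mod' n r
    have harith : ∀ (m : ℕ) (i : Fin r), m < bal n r i → m * r + (i : ℕ) < n := by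
      intro m i hm
      rw [bal] at hm
      by_cases hi : (i : ℕ) < n % r
      · rw [if_pos hi] at hm
        have h1 : m * r ≤ n / r * r := Nat.mul_le_mul_right r (by omega)
        omega
      · rw [if_neg hi] at hm
        have h1 : (m + 1) * r ≤ n / r * r := Nat.mul_le_mul_right r (by omega)
        have h2 : m * r + r = (m + 1) * r := by ring
        have h3 : (i : ℕ) < r := i.isLt
        omega
    set τ : (Fin r → ℕ) → Fin r → Fin n :=
      fun g i => (⟨(g i * r + (i : ℕ)) % n, Nat.mod_lt _ hn⟩ : Fin n) with hτ
    have hval : ∀ (g : Fin r → ℕ), (∀ i, g i < bal n r i) →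
        ∀ i, ((τ g i : Fin n) : ℕ) = g i * r + (i : ℕ) := by
      intro g hg i
      rw [hτ]
      exact Nat.mod_eq_of_lt (harith _ i (hg i))
    have hres : ∀ (g : Fin r → ℕ), (∀ i, g i < bal n r i) →
        ∀ i, ((τ g i : Fin n) : ℕ) % r = (i : ℕ) := by
      intro g hg i
      rw [hval g hg i, Nat.mul_add_mod', Nat.mod_eq_of_lt i.isLt]
    have hcard : ∏ i, bal n r i =
        #(Fintype.piFinset (fun i : Fin r => Finset.range (bal n r i))) := by
      rw [Fintype.card_piFinset]
      simp
    rw [hcard]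
    apply Finset.card_le_card_of_injOn (fun g => Finset.image (τ g) univ)
    · intro g hg
      rw [Finset.mem_coe, Fintype.mem_piFinset] at hg
      have hg' : ∀ i, g i < bal n r i := fun i => Finset.mem_range.mp (hg i)
      have hinj : Function.Injective (τ g) := by
        intro i j hij
        have := congrArg (fun x : Fin n => (x : ℕ) % r) hij
        rw [hres g hg' i, hres g hg' j] at this
        exact Fin.ext this
      rw [Finset.mem_coe, mem_cf]
      constructor
      · intro x hx y hy hxy
        rw [Finset.coe_image, Set.mem_image] at hx hy
        obtain ⟨i, -, rfl⟩ := hx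
        obtain ⟨j, -, rfl⟩ := hy
        have hij : i ≠ j := fun h => hxy (by rw [h])
        show ((τ g i : Fin n) : ℕ) % r ≠ ((τ g j : Fin n) : ℕ) % r
        rw [hres g hg' i, hres g hg' j]
        exact fun h => hij (Fin.ext h)
      · rw [Finset.card_image_of_injective _ hinj, Finset.card_univ, Fintype.card_fin]
    · intro g hg g' hg' heq
      simp only [Finset.mem_coe, Fintype.mem_piFinset] at hg hg'
      have hgl : ∀ i, g i < bal n r i := fun i => Finset.mem_range.mp (hg i)
      have hgl' : ∀ i, g' i < bal n r i := fun i => Finset.mem_range.mp (hg' i)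
      have heq' : Finset.image (τ g) univ = Finset.image (τ g') univ := heq
      funext i
      have : τ g i ∈ Finset.image (τ g') univ := by
        rw [← heq']
        exact Finset.mem_image_of_mem _ (mem_univ i)
      rw [Finset.mem_image] at this
      obtain ⟨j, -, hj⟩ := this
      have hji : j = i := by
        have h6 := congrArg (fun x : Fin n => (x : ℕ) % r) hj
        rw [hres g' hgl' j, hres g hgl i] at h6
        exact Fin.ext h6
      subst hji
      have hv2 := congrArg (fun x : Fin n => (x : ℕ)) hj
      simp only [hτ, Fin.val_mk] at hv2
      have e1 : (g' j * r + (j : ℕ)) % n = g' j * r + (j : ℕ) :=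
        Nat.mod_eq_of_lt (harith _ j (hgl' j))
      have e2 : (g j * r + (j : ℕ)) % n = g j * r + (j : ℕ) :=
        Nat.mod_eq_of_lt (harith _ j (hgl j))
      rw [e1, e2] at hv2
      have h7 : g' j * r = g j * r := by omega
      exact (Nat.eq_of_mul_eq_mul_right hr h7).symm

lemma key {V : Type*} [Fintype V] [DecidableEq V] (H : SimpleGraph V) (r : ℕ) (hr : 0 < r)
    (hfree : H.CliqueFree (r + 1))
    (htrans : ∀ x y z : V, ¬H.Adj x y → ¬H.Adj y z → ¬H.Adj x z) :
    #(cf r H) ≤ ∏ i : Fin r, bal (Fintype.card V) r i := by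
  set st : Setoid V := ⟨fun x y => ¬H.Adj x y,
    ⟨fun x => H.irrefl, fun {x y} h => fun h' => h h'.symm,
      fun {x y z} h1 h2 => htrans x y z h1 h2⟩⟩ with hst
  set π : V → Quotient st := Quotient.mk st with hπ
  have hπeq : ∀ x y : V, π x = π y ↔ ¬H.Adj x y := fun x y => by
    rw [hπ]
    exact Quotient.eq (r := st)
  have huniq : ∀ {c : Finset V}, H.IsNClique r c →
      ∀ {x y}, x ∈ c → y ∈ c → π x = π y → x = y := by
    intro c hc x y hx hy hpi
    by_contra hne
    exact ((hπeq x y).mp hpi) (adj_of_clique hc hx hy hne)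
  have hQle : Fintype.card (Quotient st) ≤ r := by
    by_contra hlt
    push_neg at hlt
    obtain ⟨f⟩ : Nonempty (Fin (r + 1) ↪ Quotient st) :=
      Function.Embedding.nonempty_of_card_le (by rw [Fintype.card_fin]; omega)
    have hinj : Function.Injective (fun i : Fin (r + 1) => (f i).out) :=
      fun i j h => f.injective (Quotient.out_injective h)
    have hclique : H.IsNClique (r + 1) (Finset.image (fun i => (f i).out) univ) := by
      constructor
      · intro x hx y hy hxy
        rw [Finset.coe_image, Set.mem_image] at hx hy
        obtain ⟨i, -, rfl⟩ := hx
        obtain ⟨j, -, rfl⟩ := hy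
        by_contra hna
        have h1 : π (f i).out = π (f j).out := (hπeq _ _).mpr hna
        rw [hπ] at h1
        rw [Quotient.out_eq, Quotient.out_eq] at h1
        exact hxy (congrArg Quotient.out h1)
      · rw [Finset.card_image_of_injective _ hinj, Finset.card_univ, Fintype.card_fin]
    exact hfree _ hclique
  rcases Finset.eq_empty_or_nonempty (cf r H) with he | ⟨c0, hc0⟩
  · rw [he]
    simp
  · have himg : ∀ {c : Finset V}, H.IsNClique r c → #(Finset.image π c) = r := by
      intro c hc
      rw [Finset.card_image_of_injOn (fun x hx y hy => huniq hc hx hy), hc.2]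
    have hQ : Fintype.card (Quotient st) = r := by
      have h1 : r ≤ Fintype.card (Quotient st) := by
        rw [← himg (mem_cf.mp hc0)]
        calc #(Finset.image π c0) ≤ #(univ : Finset (Quotient st)) :=
            Finset.card_le_card (Finset.subset_univ _)
          _ = Fintype.card (Quotient st) := Finset.card_univ
      omega
    obtain ⟨v0, hv0⟩ : ∃ v, v ∈ c0 := by
      have : 0 < #c0 := by rw [(mem_cf.mp hc0).2]; exact hr
      exact Finset.card_pos.mp this
    haveI : Nonempty V := ⟨v0⟩
    set pick : Finset V → Quotient st → V := fun c q =>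
      if h : ∃ x, x ∈ c ∧ π x = q then h.choose else Classical.arbitrary V with hpick
    have hpick_mem : ∀ {c : Finset V}, H.IsNClique r c →
        ∀ q, pick c q ∈ c ∧ π (pick c q) = q := by
      intro c hc q
      have hsurj : ∃ x, x ∈ c ∧ π x = q := by
        have h2 : Finset.image π c = univ :=
          Finset.eq_univ_of_card _ (by rw [himg hc, hQ])
        have h3 : q ∈ Finset.image π c := by rw [h2]; exact mem_univ q
        rw [Finset.mem_image] at h3
        obtain ⟨x, hx, hxq⟩ := h3
        exact ⟨x, hx, hxq⟩
      rw [hpick]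
      simp only [dif_pos hsurj]
      exact hsurj.choose_spec
    have hrecover : ∀ {c : Finset V}, H.IsNClique r c → c = Finset.image (pick c) univ := by
      intro c hc
      apply Finset.Subset.antisymm
      · intro x hx
        rw [Finset.mem_image]
        refine ⟨π x, mem_univ _, ?_⟩
        obtain ⟨hm, hq⟩ := hpick_mem hc (π x)
        exact huniq hc hm hx hq
      · intro x hx
        rw [Finset.mem_image] at hx
        obtain ⟨q, -, rfl⟩ := hx
        exact (hpick_mem hc q).1
    have hsum : ∑ q : Quotient st, #(univ.filter (fun x => π x = q)) = Fintype.card V := by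
      rw [← Finset.card_univ (α := V)]
      exact (Finset.card_eq_sum_card_fiberwise (fun x _ => mem_univ (π x))).symm
    set e : Quotient st ≃ Fin r := Fintype.equivFinOfCardEq hQ with he'
    calc #(cf r H) ≤ #(Fintype.piFinset (fun q : Quotient st =>
          univ.filter (fun x => π x = q))) := by
          apply Finset.card_le_card_of_injOn pick
          · intro c hc
            rw [Finset.mem_coe, Fintype.mem_piFinset]
            intro q
            rw [Finset.mem_filter]
            exact ⟨mem_univ _, (hpick_mem (mem_cf.mp hc) q).2⟩
          · intro c1 h1 c2 h2 hp
            rw [hrecover (mem_cf.mp (Finset.mem_coe.mp h1)),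
              hrecover (mem_cf.mp (Finset.mem_coe.mp h2)), hp]
      _ = ∏ q : Quotient st, #(univ.filter (fun x => π x = q)) := Fintype.card_piFinset _
      _ = ∏ i : Fin r, #(univ.filter (fun x => π x = e.symm i)) :=
          (Equiv.prod_comp e.symm (fun q => #(univ.filter (fun x => π x = q)))).symm
      _ ≤ ∏ i : Fin r, bal (Fintype.card V) r i := by
          apply prod_le_bal hr (∑ i : Fin r, #(univ.filter (fun x => π x = e.symm i)) *
            #(univ.filter (fun x => π x = e.symm i))) _ le_rfl
          rw [Equiv.sum_comp e.symm (fun q => #(univ.filter (fun x => π x = q)))]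
          exact hsum

lemma cfb_comm {V : Type*} [Fintype V] [DecidableEq V] (r : ℕ) (G : SimpleGraph V) (v w : V) :
    cfb r G v w = cfb r G w v := by
  ext c
  simp only [cfb, mem_filter]
  tauto

theorem zykov_main {V : Type*} [Fintype V] [DecidableEq V] (G : SimpleGraph V) (r : ℕ)
    (hr : 0 < r) (hG : G.CliqueFree (r + 1)) (n : ℕ) (hn : Fintype.card V = n) :
    #(cf r G) ≤ #(cf r (turanGraph n r)) := by
  classical
  set E := Fintype.card (Sym2 V) with hE
  set φ : SimpleGraph V → ℕ := fun K => #(cf r K) * (E + 1) + (E - ecnt K) with hφ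
  set S : Finset (SimpleGraph V) := univ.filter (fun K => K.CliqueFree (r + 1)) with hS
  have hGS : G ∈ S := by rw [hS, mem_filter]; exact ⟨mem_univ _, hG⟩
  obtain ⟨H, hHS, hmax⟩ := S.exists_max_image φ ⟨G, hGS⟩
  have hHfree : H.CliqueFree (r + 1) := by
    rw [hS, mem_filter] at hHS
    exact hHS.2
  -- M1 : clique-count maximality
  have M1 : ∀ K : SimpleGraph V, K.CliqueFree (r + 1) → #(cf r K) ≤ #(cf r H) := by
    intro K hK
    have h1 : φ K ≤ φ H := hmax K (by rw [hS, mem_filter]; exact ⟨mem_univ _, hK⟩)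
    rw [hφ] at h1
    simp only at h1
    by_contra hcon
    push_neg at hcon
    have p1 : (#(cf r H) + 1) * (E + 1) ≤ #(cf r K) * (E + 1) :=
      Nat.mul_le_mul_right _ (by omega)
    have p2 : #(cf r H) * (E + 1) + (E + 1) = (#(cf r H) + 1) * (E + 1) := by ring
    omega
  -- M2 : among clique-count maximizers, H has minimal edge count
  have M2 : ∀ K : SimpleGraph V, K.CliqueFree (r + 1) → #(cf r K) = #(cf r H) →
      ecnt H ≤ ecnt K := by
    intro K hK hcc
    have h1 : φ K ≤ φ H := hmax K (by rw [hS, mem_filter]; exact ⟨mem_univ _, hK⟩)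
    rw [hφ] at h1
    simp only at h1
    have p1 : #(cf r K) * (E + 1) = #(cf r H) * (E + 1) := by rw [hcc]
    have p2 := ecnt_le H
    have p3 := ecnt_le K
    rw [← hE] at p2 p3
    omega
  -- equal clique-degrees of non-adjacent vertices
  have step1 : ∀ a b : V, a ≠ b → ¬H.Adj a b → #(cfm r H a) ≤ #(cfm r H b) := by
    intro a b hab hnadj
    have e := cc_replace hab hnadj r
    have hle := M1 _ (hHfree.replaceVertex a b)
    omega
  have hAeq : ∀ a b : V, a ≠ b → ¬H.Adj a b → #(cfm r H a) = #(cfm r H b) :=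
    fun a b hab hnadj =>
      le_antisymm (step1 a b hab hnadj) (step1 b a hab.symm (fun h => hnadj h.symm))
  -- transitivity of non-adjacency in H
  have htrans : ∀ x y z : V, ¬H.Adj x y → ¬H.Adj y z → ¬H.Adj x z := by
    intro x y z hxy hyz hxz
    rcases eq_or_ne x y with rfl | hnxy
    · exact hyz hxz
    rcases eq_or_ne y z with rfl | hnyz
    · exact hxy hxz
    have hnxz : x ≠ z := hxz.ne
    have hnyx : ¬H.Adj y x := fun h => hxy h.symm
    have hA1 : #(cfm r H x) = #(cfm r H y) := hAeq x y hnxy hxy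
    have hA2 : #(cfm r H y) = #(cfm r H z) := hAeq y z hnyz hyz
    -- first replacement : replace x by a copy of y
    have e1 := cc_replace (Ne.symm hnxy) hnyx r
    have hb := ccAt_replace (G := H) (s := y) (t := x) y (H.irrefl) (Ne.symm hnxy) r
    have hb0 : #(cfb r H y x) = 0 := cfb_eq_zero (Ne.symm hnxy) hnyx r
    have hc := ccAt_replace (G := H) (s := y) (t := x) z hyz (Ne.symm hnxz) r
    -- second replacement : replace z by a copy of y
    have hnyz1 : ¬(H.replaceVertex y x).Adj y z := by
      rw [H.adj_replaceVertex_iff_of_ne y (Ne.symm hnxy) (Ne.symm hnxz)]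
      exact hyz
    have e2 := cc_replace (G := H.replaceVertex y x) hnyz hnyz1 r
    have hle2 := M1 _ ((hHfree.replaceVertex y x).replaceVertex y z)
    have hzx0 : #(cfb r H z x) = 0 := by omega
    have hxz0 : #(cfb r H x z) = 0 := by rw [cfb_comm]; exact hzx0
    -- delete the edge x-z : same cliques, fewer edges
    have hdel := cf_deleteEdge r hxz0
    have hfree3 : (H.deleteEdges {s(x, z)}).CliqueFree (r + 1) :=
      hHfree.anti (H.deleteEdges_le _)
    have hcc3 : #(cf r (H.deleteEdges {s(x, z)})) = #(cf r H) := congrArg _ hdel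
    have hlt := ecnt_deleteEdge_lt hxz
    have hge := M2 _ hfree3 hcc3
    omega
  calc #(cf r G) ≤ #(cf r H) := M1 G hG
    _ ≤ ∏ i : Fin r, bal (Fintype.card V) r i := key H r hr hHfree htrans
    _ = ∏ i : Fin r, bal n r i := by rw [hn]
    _ ≤ #(cf r (turanGraph n r)) := bal_prod_le_turan n r hr

end Zykov

/-- Zykov's theorem (special case): a `K_k`-free graph on `n` vertices has at most as many
copies of `K_{k-1}` (i.e. `(k-1)`-cliques) as the Turán graph `T_{k-1}(n)`. -/
theorem stmt_13 {V : Type*} [Fintype V] (G : SimpleGraph V) (n k : ℕ) (hk : 2 ≤ k)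
    (hn : Fintype.card V = n) (hG : G.CliqueFree k) :
    {s : Finset V | G.IsNClique (k - 1) s}.ncard ≤
      {s : Finset (Fin n) | (SimpleGraph.turanGraph n (k - 1)).IsNClique (k - 1) s}.ncard := by
  classical
  set r := k - 1 with hrdef
  have hr : 0 < r := by omega
  have hk1 : r + 1 = k := by omega
  rw [← hk1] at hG
  have hL : {s : Finset V | G.IsNClique r s} = ↑(Zykov.cf r G) := by
    ext c
    simp [Zykov.cf]
  have hR : {s : Finset (Fin n) | (SimpleGraph.turanGraph n r).IsNClique r s} =
      ↑(Zykov.cf r (SimpleGraph.turanGraph n r)) := by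
    ext c
    simp [Zykov.cf]
  rw [hL, hR, Set.ncard_coe_finset, Set.ncard_coe_finset]
  exact Zykov.zykov_main G r hr hG n hn
end
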